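/- In the summer internship problem with all supervisor budgets integers, if a matching M is supervisor-feasible then there exists a feasible funding allocation in which all x_{s,p} are integers. -/
import Mathlib

open Finset

open scoped Classical in
noncomputable def NS {P S : Type} [Fintype S] (R : S → P → Prop) (T : Finset P) : Finset S :=
  univ.filter fun s => ∃ p ∈ T, R s p

lemma NS_union {P S : Type} [Fintype S] [DecidableEq P] [DecidableEq S] (R : S → P → Prop) (T1 T2 : Finset P) :
    NS R (T1 ∪ T2) = NS R T1 ∪ NS R T2 := by
  classical
  ext s
  simp only [NS, mem_filter, mem_union, mem_univ, true_and]
  constructor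
  · rintro ⟨p, hp | hp, hR⟩
    · exact Or.inl ⟨p, hp, hR⟩
    · exact Or.inr ⟨p, hp, hR⟩
  · rintro (⟨p, hp, hR⟩ | ⟨p, hp, hR⟩)
    · exact ⟨p, Or.inl hp, hR⟩
    · exact ⟨p, Or.inr hp, hR⟩

lemma NS_mono {P S : Type} [Fintype S] (R : S → P → Prop) {T1 T2 : Finset P} (h : T1 ⊆ T2) :
    NS R T1 ⊆ NS R T2 := by
  classical
  intro s hs
  simp only [NS, mem_filter, mem_univ, true_and] at hs ⊢
  obtain ⟨p, hp, hR⟩ := hs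
  exact ⟨p, h hp, hR⟩

lemma NS_empty {P S : Type} [Fintype S] (R : S → P → Prop) : NS R (∅ : Finset P) = ∅ := by
  classical
  ext s; simp [NS]

lemma hall_int {P S : Type} [Fintype P] [Fintype S] [DecidableEq P] [DecidableEq S]
    (R : S → P → Prop) :
    ∀ (n : ℕ) (d : P → ℕ) (Q : S → ℕ), (∑ p, d p) ≤ n →
    (∀ T : Finset P, ∑ p ∈ T, d p ≤ ∑ s ∈ NS R T, Q s) →
    ∃ x : S → P → ℕ, (∀ s p, ¬ R s p → x s p = 0) ∧
      (∀ p, (∑ s, x s p) = d p) ∧ (∀ s, (∑ p, x s p) ≤ Q s) := by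
  intro n
  induction n with
  | zero =>
    intro d Q hsum _
    have hd0 : ∀ p, d p = 0 := by
      intro p
      have := Finset.sum_eq_zero_iff.1 (Nat.le_zero.1 hsum) p (mem_univ p)
      exact this
    exact ⟨fun _ _ => 0, fun _ _ _ => rfl, fun p => by simp [hd0 p], fun s => by simp⟩
  | succ n ih =>
    intro d Q hsum hall
    by_cases hle : ∑ p, d p ≤ n
    · exact ih d Q hle hall
    have hpos : ∑ p, d p = n + 1 := by omega
    obtain ⟨p0, -, hp0⟩ : ∃ p ∈ univ, d p ≠ 0 :=
      Finset.exists_ne_zero_of_sum_ne_zero (by omega)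
    -- tight sets
    set Tight : Finset P → Prop := fun T => ∑ p ∈ T, d p = ∑ s ∈ NS R T, Q s with hTight
    have tight_union : ∀ T1 : Finset P, (p0 ∉ T1 ∧ Tight T1) → ∀ T2 : Finset P,
        (p0 ∉ T2 ∧ Tight T2) → (p0 ∉ T1 ∪ T2 ∧ Tight (T1 ∪ T2)) := by
      rintro T1 ⟨hn1, ht1⟩ T2 ⟨hn2, ht2⟩
      refine ⟨by simp [hn1, hn2], ?_⟩
      have ha : ∑ p ∈ T1 ∪ T2, d p + ∑ p ∈ T1 ∩ T2, d p = ∑ p ∈ T1, d p + ∑ p ∈ T2, d p :=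
        Finset.sum_union_inter
      have hb : ∑ s ∈ NS R T1 ∪ NS R T2, Q s + ∑ s ∈ NS R T1 ∩ NS R T2, Q s
          = ∑ s ∈ NS R T1, Q s + ∑ s ∈ NS R T2, Q s := Finset.sum_union_inter
      have hc1 : ∑ p ∈ T1 ∩ T2, d p ≤ ∑ s ∈ NS R (T1 ∩ T2), Q s := hall _
      have hc2 : ∑ s ∈ NS R (T1 ∩ T2), Q s ≤ ∑ s ∈ NS R T1 ∩ NS R T2, Q s :=
        Finset.sum_le_sum_of_subset
          (Finset.subset_inter (NS_mono R (inter_subset_left)) (NS_mono R (inter_subset_right)))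
      have hd : ∑ p ∈ T1 ∪ T2, d p ≤ ∑ s ∈ NS R (T1 ∪ T2), Q s := hall _
      have he : NS R (T1 ∪ T2) = NS R T1 ∪ NS R T2 := NS_union R T1 T2
      simp only [hTight] at ht1 ht2 ⊢
      rw [he] at hd ⊢
      omega
    set 𝒯 : Finset (Finset P) := univ.filter (fun T => p0 ∉ T ∧ Tight T) with h𝒯
    set Tstar : Finset P := 𝒯.sup id with hTstar
    have hstar : p0 ∉ Tstar ∧ Tight Tstar := by
      rw [hTstar]
      exact Finset.sup_induction (p := fun T => p0 ∉ T ∧ Tight T)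
        ⟨notMem_empty p0, by simp [hTight, NS_empty]⟩
        tight_union (fun T hT => (mem_filter.1 hT).2)
    -- find s0
    have hins := hall (insert p0 Tstar)
    rw [Finset.sum_insert hstar.1, Finset.insert_eq, NS_union] at hins
    set N0 : Finset S := NS R {p0} with hN0
    set NT : Finset S := NS R Tstar with hNT
    have hsplit : ∑ s ∈ N0 ∪ NT, Q s = ∑ s ∈ NT, Q s + ∑ s ∈ N0 \ NT, Q s := by
      rw [← Finset.sum_union disjoint_sdiff, Finset.union_sdiff_self_eq_union, union_comm]
    have hkey : d p0 ≤ ∑ s ∈ N0 \ NT, Q s := by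
      have h2 := hstar.2
      simp only [hTight] at h2
      rw [← hNT] at h2
      rw [hsplit] at hins
      omega
    obtain ⟨s0, hs0mem, hQs0⟩ : ∃ s ∈ N0 \ NT, Q s ≠ 0 :=
      Finset.exists_ne_zero_of_sum_ne_zero (by omega)
    have hRs0 : R s0 p0 := by
      have := (Finset.mem_sdiff.1 hs0mem).1
      simp only [hN0, NS, mem_filter, mem_univ, true_and, mem_singleton] at this
      obtain ⟨p, hp, hR⟩ := this
      rwa [hp] at hR
    have hs0NT : s0 ∉ NT := (Finset.mem_sdiff.1 hs0mem).2
    -- decremented problem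
    set d' : P → ℕ := Function.update d p0 (d p0 - 1) with hd'
    set Q' : S → ℕ := Function.update Q s0 (Q s0 - 1) with hQ'
    have hd'mem : ∀ T : Finset P, p0 ∈ T → ∑ p ∈ T, d' p + 1 = ∑ p ∈ T, d p := by
      intro T hp
      rw [← Finset.add_sum_erase _ d hp, ← Finset.add_sum_erase _ d' hp]
      have h1 : ∑ p ∈ T.erase p0, d' p = ∑ p ∈ T.erase p0, d p :=
        Finset.sum_congr rfl fun p hp' => Function.update_of_ne (Finset.ne_of_mem_erase hp') _ _
      have h2 : d' p0 = d p0 - 1 := Function.update_self _ _ _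
      omega
    have hd'not : ∀ T : Finset P, p0 ∉ T → ∑ p ∈ T, d' p = ∑ p ∈ T, d p := by
      intro T hp
      exact Finset.sum_congr rfl fun p hp' =>
        Function.update_of_ne (by rintro rfl; exact hp hp') _ _
    have hQ'mem : ∀ E : Finset S, s0 ∈ E → ∑ s ∈ E, Q' s + 1 = ∑ s ∈ E, Q s := by
      intro E hs
      rw [← Finset.add_sum_erase _ Q hs, ← Finset.add_sum_erase _ Q' hs]
      have h1 : ∑ s ∈ E.erase s0, Q' s = ∑ s ∈ E.erase s0, Q s :=
        Finset.sum_congr rfl fun s hs' => Function.update_of_ne (Finset.ne_of_mem_erase hs') _ _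
      have h2 : Q' s0 = Q s0 - 1 := Function.update_self _ _ _
      omega
    have hQ'not : ∀ E : Finset S, s0 ∉ E → ∑ s ∈ E, Q' s = ∑ s ∈ E, Q s := by
      intro E hs
      exact Finset.sum_congr rfl fun s hs' =>
        Function.update_of_ne (by rintro rfl; exact hs hs') _ _
    have hall' : ∀ T : Finset P, ∑ p ∈ T, d' p ≤ ∑ s ∈ NS R T, Q' s := by
      intro T
      by_cases hpT : p0 ∈ T
      · have hs0T : s0 ∈ NS R T := by
          simp only [NS, mem_filter, mem_univ, true_and]
          exact ⟨p0, hpT, hRs0⟩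
        have := hall T
        have h1 := hd'mem T hpT
        have h2 := hQ'mem (NS R T) hs0T
        omega
      · rw [hd'not T hpT]
        by_cases htight : Tight T
        · have hT𝒯 : T ∈ 𝒯 := by
            rw [h𝒯, mem_filter]
            exact ⟨mem_univ _, hpT, htight⟩
          have hsub : T ⊆ Tstar := Finset.le_sup (f := id) hT𝒯
          have hs0T : s0 ∉ NS R T := fun h => hs0NT (NS_mono R hsub h)
          rw [hQ'not _ hs0T]
          exact le_of_eq htight
        · have hlt : ∑ p ∈ T, d p < ∑ s ∈ NS R T, Q s :=
            lt_of_le_of_ne (hall T) htight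
          by_cases hs0T : s0 ∈ NS R T
          · have := hQ'mem (NS R T) hs0T
            omega
          · rw [hQ'not _ hs0T]
            omega
    have hsum' : ∑ p, d' p ≤ n := by
      have := hd'mem univ (mem_univ p0)
      omega
    obtain ⟨x', hx'1, hx'2, hx'3⟩ := ih d' Q' hsum' hall'
    refine ⟨fun s p => x' s p + (if s = s0 ∧ p = p0 then 1 else 0), ?_, ?_, ?_⟩
    · intro s p hR
      show x' s p + (if s = s0 ∧ p = p0 then 1 else 0) = 0
      rw [hx'1 s p hR]
      simp only [Nat.zero_add]
      rw [if_neg]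
      rintro ⟨rfl, rfl⟩
      exact hR hRs0
    · intro p
      show ∑ s, (x' s p + (if s = s0 ∧ p = p0 then 1 else 0)) = d p
      rw [Finset.sum_add_distrib, hx'2 p]
      by_cases hp : p = p0
      · have h1 : ∑ s, (if s = s0 ∧ p = p0 then 1 else 0) = 1 := by
          simp only [hp, and_true]
          simp [Finset.sum_ite_eq']
        rw [h1, hd', hp, Function.update_self]
        omega
      · have h1 : ∑ s : S, (if s = s0 ∧ p = p0 then 1 else 0) = 0 := by
          simp [hp]
        rw [h1, hd', Function.update_of_ne hp]
        omega
    · intro s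
      show ∑ p, (x' s p + (if s = s0 ∧ p = p0 then 1 else 0)) ≤ Q s
      rw [Finset.sum_add_distrib]
      by_cases hs : s = s0
      · have h1 : ∑ p, (if s = s0 ∧ p = p0 then 1 else 0) = 1 := by
          simp only [hs, true_and]
          simp [Finset.sum_ite_eq']
        rw [h1]
        have h2 : Q' s0 = Q s0 - 1 := Function.update_self _ _ _
        have h3 := hx'3 s
        rw [hs] at h3 ⊢
        omega
      · have h1 : ∑ p : P, (if s = s0 ∧ p = p0 then 1 else 0) = 0 := by
          simp [hs]
        rw [h1]
        have h3 := hx'3 s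
        have h4 : Q' s = Q s := Function.update_of_ne hs _ _
        omega

/-- number of applicants matched to project `p` -/
def mcount {A P : Type} [Fintype A] [DecidableEq P] (M : A → Option P) (p : P) : ℕ :=
  (univ.filter fun a => M a = some p).card

/-- A matching is supervisor-feasible if supervisor budgets can be split among their
projects so that each project receives one unit of funding per matched applicant. -/
def SupFeasible {A P S : Type} [Fintype A] [Fintype P] [Fintype S] [DecidableEq P]
    (q : S → ℝ) (Ps : S → P → Prop) (M : A → Option P) : Prop :=
  ∃ x : S → P → ℝ, (∀ s p, 0 ≤ x s p) ∧ (∀ s p, ¬ Ps s p → x s p = 0) ∧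
    (∀ p, (∑ s, x s p) = (mcount M p : ℝ)) ∧ (∀ s, (∑ p, x s p) ≤ q s)

/-- with integer supervisor budgets, every supervisor-feasible matching
admits a feasible funding allocation in which all amounts `x_{s,p}` are integers. -/
theorem supFeasible_integral_allocation {A P S : Type}
    [Fintype A] [Fintype P] [Fintype S] [DecidableEq P]
    (q : S → ℤ) (Ps : S → P → Prop) (M : A → Option P)
    (hM : SupFeasible (fun s => (q s : ℝ)) Ps M) :
    ∃ x : S → P → ℕ, (∀ s p, ¬ Ps s p → x s p = 0) ∧
      (∀ p, (∑ s, x s p) = mcount M p) ∧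
      (∀ s, ((∑ p, x s p : ℕ) : ℤ) ≤ q s) := by
  classical
  obtain ⟨x, hx0, hxz, hxc, hxr⟩ := hM
  have hq0 : ∀ s, 0 ≤ q s := by
    intro s
    have h1 : (0:ℝ) ≤ ∑ p, x s p := Finset.sum_nonneg fun p _ => hx0 s p
    have h2 := hxr s
    have h3 : (0:ℝ) ≤ (q s : ℝ) := le_trans h1 h2
    exact_mod_cast h3
  set Q : S → ℕ := fun s => (q s).toNat with hQdef
  have hQq : ∀ s, (Q s : ℤ) = q s := fun s => Int.toNat_of_nonneg (hq0 s)
  set d : P → ℕ := fun p => mcount M p with hddef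
  have hall : ∀ T : Finset P, ∑ p ∈ T, d p ≤ ∑ s ∈ NS Ps T, Q s := by
    intro T
    have key : (∑ p ∈ T, (d p : ℝ)) ≤ ∑ s ∈ NS Ps T, (Q s : ℝ) := by
      calc ∑ p ∈ T, (d p:ℝ) = ∑ p ∈ T, ∑ s, x s p :=
            Finset.sum_congr rfl fun p _ => (hxc p).symm
        _ = ∑ s, ∑ p ∈ T, x s p := Finset.sum_comm
        _ = ∑ s ∈ NS Ps T, ∑ p ∈ T, x s p := by
            symm
            apply Finset.sum_subset (subset_univ _)
            intro s _ hs
            simp only [NS, mem_filter, mem_univ, true_and] at hs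
            push_neg at hs
            exact Finset.sum_eq_zero fun p hp => hxz s p (hs p hp)
        _ ≤ ∑ s ∈ NS Ps T, ∑ p, x s p :=
            Finset.sum_le_sum fun s _ =>
              Finset.sum_le_sum_of_subset_of_nonneg (subset_univ T) fun p _ _ => hx0 s p
        _ ≤ ∑ s ∈ NS Ps T, (q s : ℝ) := Finset.sum_le_sum fun s _ => hxr s
        _ = ∑ s ∈ NS Ps T, (Q s : ℝ) := by
            refine Finset.sum_congr rfl fun s _ => ?_
            rw [← hQq s]
            push_cast
            ring
    exact_mod_cast key
  obtain ⟨y, hy1, hy2, hy3⟩ := hall_int Ps (∑ p, d p) d Q le_rfl hall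
  refine ⟨y, hy1, hy2, fun s => ?_⟩
  rw [← hQq s]
  exact_mod_cast hy3 s
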